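/- arXiv:2308.02464 — 2 statements merged into one kernel-verified Lean document; each statement's English description precedes it below -/
import Mathlib

section
/- For M = 2 and distinct β_1, β_2, α ∈ (-1,1), the projection error of s_α/‖s_α‖ onto span(s_{β_1}, s_{β_2}) in ℓ² equals ε = 1 - [(1-α²)(1-β_1β_2)/(β_1-β_2)²]·[(1-β_1²)(1-β_1β_2)/(1-αβ_1)² - 2(1-β_1²)(1-β_2²)/((1-αβ_1)(1-αβ_2)) + (1-β_2²)(1-β_1β_2)/(1-αβ_2)²]. -/
/-!
The quadratic form `r ⬝ᵥ Σ⁻¹ r` of a `2 × 2` matrix is the adjugate's quadratic form divided by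
`det Σ`, and the Gram matrix `Σ` of `s_{β₁}, s_{β₂}` is a Cauchy-type matrix with
`det Σ = (β₁ - β₂)² / ((1 - β₁²) (1 - β₂²) (1 - β₁β₂)²)`. What remains is a rational identity,
once `√(1 - α²)²` is replaced by `1 - α²`.
-/

open Matrix

theorem Matrix.dotProduct_inv_mulVec_fin_two {K : Type*} [Field K] (A : Matrix (Fin 2) (Fin 2) K)
    (v : Fin 2 → K) :
    v ⬝ᵥ A⁻¹ *ᵥ v = (A 1 1 * v 0 ^ 2 - (A 0 1 + A 1 0) * v 0 * v 1 + A 0 0 * v 1 ^ 2) / A.det := by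
  rw [inv_def, adjugate_fin_two, Ring.inverse_eq_inv', smul_mulVec, dotProduct_smul]
  simp only [dotProduct, mulVec, Fin.sum_univ_two, of_apply, cons_val', cons_val_zero,
    cons_val_one, empty_val', cons_val_fin_one, smul_eq_mul]
  field_simp
  ring

theorem Matrix.det_one_div_one_sub_mul_fin_two {K : Type*} [Field K] {β₁ β₂ : K}
    (h₁ : 1 - β₁ * β₁ ≠ 0) (h₂ : 1 - β₂ * β₂ ≠ 0) (h₁₂ : 1 - β₁ * β₂ ≠ 0) :
    det !![1 / (1 - β₁ * β₁), 1 / (1 - β₁ * β₂); 1 / (1 - β₂ * β₁), 1 / (1 - β₂ * β₂)] =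
      (β₁ - β₂) ^ 2 / ((1 - β₁ * β₁) * (1 - β₂ * β₂) * (1 - β₁ * β₂) ^ 2) := by
  rw [det_fin_two_of, mul_comm β₂ β₁, div_mul_div_comm, div_mul_div_comm,
    div_sub_div _ _ (mul_ne_zero h₁ h₂) (mul_ne_zero h₁₂ h₁₂)]
  congr 1 <;> ring

theorem one_sub_mul_pos_of_mem_Ioo {a b : ℝ} (ha : a ∈ Set.Ioo (-1 : ℝ) 1)
    (hb : b ∈ Set.Ioo (-1 : ℝ) 1) : 0 < 1 - a * b := by
  obtain ⟨ha₁, ha₂⟩ := ha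
  obtain ⟨hb₁, hb₂⟩ := hb
  nlinarith

theorem stmt_5_general (α β₁ β₂ : ℝ) (hα : α ∈ Set.Ioo (-1 : ℝ) 1)
    (hβ₁ : β₁ ∈ Set.Ioo (-1 : ℝ) 1) (hβ₂ : β₂ ∈ Set.Ioo (-1 : ℝ) 1)
    (Sig : Matrix (Fin 2) (Fin 2) ℝ)
    (hSig : Sig = !![1 / (1 - β₁ * β₁), 1 / (1 - β₁ * β₂); 1 / (1 - β₂ * β₁), 1 / (1 - β₂ * β₂)])
    (r : Fin 2 → ℝ)
    (hr : r = ![Real.sqrt (1 - α ^ 2) / (1 - α * β₁), Real.sqrt (1 - α ^ 2) / (1 - α * β₂)]) :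
    1 - r ⬝ᵥ (Sig⁻¹).mulVec r =
      1 - ((1 - α ^ 2) * (1 - β₁ * β₂) / (β₁ - β₂) ^ 2) *
        ((1 - β₁ ^ 2) * (1 - β₁ * β₂) / (1 - α * β₁) ^ 2
          - 2 * (1 - β₁ ^ 2) * (1 - β₂ ^ 2) / ((1 - α * β₁) * (1 - α * β₂))
          + (1 - β₂ ^ 2) * (1 - β₁ * β₂) / (1 - α * β₂) ^ 2) := by
  have h₁ := (one_sub_mul_pos_of_mem_Ioo hβ₁ hβ₁).ne'
  have h₂ := (one_sub_mul_pos_of_mem_Ioo hβ₂ hβ₂).ne'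
  have h₁₂ := (one_sub_mul_pos_of_mem_Ioo hβ₁ hβ₂).ne'
  have h₂₁ := (one_sub_mul_pos_of_mem_Ioo hβ₂ hβ₁).ne'
  have hα₁ := (one_sub_mul_pos_of_mem_Ioo hα hβ₁).ne'
  have hα₂ := (one_sub_mul_pos_of_mem_Ioo hβ₂ hα).ne'
  have hsqrt : Real.sqrt (1 - α ^ 2) ^ 2 = 1 - α ^ 2 :=
    Real.sq_sqrt (by rw [sq]; exact (one_sub_mul_pos_of_mem_Ioo hα hα).le)
  rw [dotProduct_inv_mulVec_fin_two, hSig, det_one_div_one_sub_mul_fin_two h₁ h₂ h₁₂,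
    div_div_eq_mul_div, div_mul_eq_mul_div, hr]
  -- both sides are now `1 - N / (β₁ - β₂) ^ 2`; compare the numerators
  congr 2
  simp only [of_apply, cons_val', cons_val_zero, cons_val_one, empty_val', cons_val_fin_one]
  have h₁' : 1 - β₁ ^ 2 ≠ 0 := by rwa [sq]
  have h₂' : 1 - β₂ ^ 2 ≠ 0 := by rwa [sq]
  field_simp
  rw [hsqrt]
  ring

theorem stmt_5 (α β₁ β₂ : ℝ) (hα : α ∈ Set.Ioo (-1 : ℝ) 1)
    (hβ₁ : β₁ ∈ Set.Ioo (-1 : ℝ) 1) (hβ₂ : β₂ ∈ Set.Ioo (-1 : ℝ) 1) (hne : β₁ ≠ β₂)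
    (Sig : Matrix (Fin 2) (Fin 2) ℝ)
    (hSig : Sig = !![1 / (1 - β₁ * β₁), 1 / (1 - β₁ * β₂); 1 / (1 - β₂ * β₁), 1 / (1 - β₂ * β₂)])
    (r : Fin 2 → ℝ)
    (hr : r = ![Real.sqrt (1 - α ^ 2) / (1 - α * β₁), Real.sqrt (1 - α ^ 2) / (1 - α * β₂)]) :
    1 - r ⬝ᵥ (Sig⁻¹).mulVec r =
      1 - ((1 - α ^ 2) * (1 - β₁ * β₂) / (β₁ - β₂) ^ 2) *
        ((1 - β₁ ^ 2) * (1 - β₁ * β₂) / (1 - α * β₁) ^ 2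
          - 2 * (1 - β₁ ^ 2) * (1 - β₂ ^ 2) / ((1 - α * β₁) * (1 - α * β₂))
          + (1 - β₂ ^ 2) * (1 - β₁ * β₂) / (1 - α * β₂) ^ 2) :=
  stmt_5_general α β₁ β₂ hα hβ₁ hβ₂ Sig hSig r hr
end

section
/- For fixed β ∈ (-1,1), the derivative with respect to α of the two-pole projection error ε(α; β-Δ, β+Δ), evaluated at α = β, equals 4β(1-β²+Δ²)Δ⁴ / ((1-β²)² - β²Δ²)³. -/
/-!
The two-pole projection error is the square of a Blaschke product:
`ε(α; β₁, β₂) = (b_{β₁}(α) · b_{β₂}(α))²` with `b_c(α) = (α - c) / (1 - α c)`.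
Hence `∂ε/∂α = 2 B B'`, and at `α = β` with `β₁,₂ = β ∓ Δ` the two factors are
`Δ / (1 - β(β - Δ))` and `-Δ / (1 - β(β + Δ))`, whose denominators multiply to
`(1 - β²)² - β²Δ²`.
-/

/-- Two-pole projection error formula. -/
noncomputable def epsTwo (α β₁ β₂ : ℝ) : ℝ :=
  1 - ((1 - α ^ 2) * (1 - β₁ * β₂) / (β₁ - β₂) ^ 2) *
    ((1 - β₁ ^ 2) * (1 - β₁ * β₂) / (1 - α * β₁) ^ 2
      - 2 * (1 - β₁ ^ 2) * (1 - β₂ ^ 2) / ((1 - α * β₁) * (1 - α * β₂))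
      + (1 - β₂ ^ 2) * (1 - β₁ * β₂) / (1 - α * β₂) ^ 2)

open Filter Topology

noncomputable def blaschkeFactor {𝕜 : Type*} [Field 𝕜] (b α : 𝕜) : 𝕜 := (α - b) / (1 - α * b)

theorem hasDerivAt_blaschkeFactor {𝕜 : Type*} [NontriviallyNormedField 𝕜] {b α : 𝕜}
    (h : 1 - α * b ≠ 0) :
    HasDerivAt (blaschkeFactor b) ((1 - b ^ 2) / (1 - α * b) ^ 2) α := by
  refine (((hasDerivAt_id' α).sub_const b).fun_div
    (((hasDerivAt_id' α).mul_const b).const_sub 1) h).congr_deriv ?_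
  field_simp
  ring

theorem epsTwo_eq_sq_blaschkeFactor {α β₁ β₂ : ℝ} (hβ : β₁ ≠ β₂)
    (h₁ : 1 - α * β₁ ≠ 0) (h₂ : 1 - α * β₂ ≠ 0) :
    epsTwo α β₁ β₂ = (blaschkeFactor β₁ α * blaschkeFactor β₂ α) ^ 2 := by
  have : β₁ - β₂ ≠ 0 := sub_ne_zero.mpr hβ
  unfold epsTwo blaschkeFactor
  field_simp
  ring

theorem epsTwo_eventuallyEq_sq_blaschkeFactor {α β₁ β₂ : ℝ} (hβ : β₁ ≠ β₂)
    (h₁ : 1 - α * β₁ ≠ 0) (h₂ : 1 - α * β₂ ≠ 0) :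
    (fun a => epsTwo a β₁ β₂) =ᶠ[𝓝 α]
      fun a => (blaschkeFactor β₁ a * blaschkeFactor β₂ a) ^ 2 := by
  have hc : ∀ b : ℝ, Continuous fun a : ℝ => 1 - a * b := fun b => by fun_prop
  filter_upwards [(hc β₁).continuousAt.eventually_ne h₁, (hc β₂).continuousAt.eventually_ne h₂]
    with a ha₁ ha₂
  exact epsTwo_eq_sq_blaschkeFactor hβ ha₁ ha₂

theorem hasDerivAt_epsTwo {α β₁ β₂ : ℝ} (hβ : β₁ ≠ β₂)
    (h₁ : 1 - α * β₁ ≠ 0) (h₂ : 1 - α * β₂ ≠ 0) :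
    HasDerivAt (fun a => epsTwo a β₁ β₂)
      (2 * (blaschkeFactor β₁ α * blaschkeFactor β₂ α) *
        ((1 - β₁ ^ 2) / (1 - α * β₁) ^ 2 * blaschkeFactor β₂ α +
          blaschkeFactor β₁ α * ((1 - β₂ ^ 2) / (1 - α * β₂) ^ 2))) α := by
  have hsq :=
    ((hasDerivAt_blaschkeFactor h₁).fun_mul (hasDerivAt_blaschkeFactor h₂)).fun_pow 2
  refine (hsq.congr_of_eventuallyEq
    (epsTwo_eventuallyEq_sq_blaschkeFactor hβ h₁ h₂)).congr_deriv ?_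
  norm_num

theorem stmt_8_general (β Δ : ℝ) (hΔ : 0 < Δ)
    (hden : β ^ 2 * Δ ^ 2 < (1 - β ^ 2) ^ 2) :
    deriv (fun α => epsTwo α (β - Δ) (β + Δ)) β =
      4 * β * (1 - β ^ 2 + Δ ^ 2) * Δ ^ 4 / ((1 - β ^ 2) ^ 2 - β ^ 2 * Δ ^ 2) ^ 3 := by
  have hprod : (1 - β * (β - Δ)) * (1 - β * (β + Δ)) = (1 - β ^ 2) ^ 2 - β ^ 2 * Δ ^ 2 := by
    ring
  have hD : (1 - β ^ 2) ^ 2 - β ^ 2 * Δ ^ 2 ≠ 0 := (sub_pos.mpr hden).ne'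
  obtain ⟨h₁, h₂⟩ := mul_ne_zero_iff.mp (hprod ▸ hD)
  rw [(hasDerivAt_epsTwo (by linarith) h₁ h₂).deriv, ← hprod]
  unfold blaschkeFactor
  field_simp
  ring

theorem stmt_8 (β Δ : ℝ) (hβ : β ∈ Set.Ioo (-1 : ℝ) 1) (hΔ : 0 < Δ)
    (h₁ : β - Δ ∈ Set.Ioo (-1 : ℝ) 1) (h₂ : β + Δ ∈ Set.Ioo (-1 : ℝ) 1)
    (hden : β ^ 2 * Δ ^ 2 < (1 - β ^ 2) ^ 2) :
    deriv (fun α => epsTwo α (β - Δ) (β + Δ)) β =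
      4 * β * (1 - β ^ 2 + Δ ^ 2) * Δ ^ 4 / ((1 - β ^ 2) ^ 2 - β ^ 2 * Δ ^ 2) ^ 3 :=
  stmt_8_general β Δ hΔ hden
end
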